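/- A surreal number x lies in the image of the canonical embedding of the ordinals into the surreal numbers (o ↦ the surreal represented by the numeric pregame Ordinal.toPGame o) if and only if x is represented by some numeric pregame that has no Right moves (its type of Right options is empty). -/

import Mathlib

namespace SetTheory

/-- Pre-games (formerly `SetTheory.PGame` in Mathlib). -/
inductive PGame : Type (u + 1)
  | mk : ∀ α β : Type u, (α → PGame) → (β → PGame) → PGame

namespace PGame

def LeftMoves : PGame → Type u
  | mk l _ _ _ => l

def RightMoves : PGame → Type u
  | mk _ r _ _ => r

def moveLeft : ∀ g : PGame, LeftMoves g → PGame
  | mk _l _ L _ => L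

def moveRight : ∀ g : PGame, RightMoves g → PGame
  | mk _ _r _ R => R

/-- The pair (`x ≤ y`, `x ⧏ y`), defined by simultaneous recursion. -/
noncomputable def leLF : PGame.{u} → PGame.{u} → Prop × Prop :=
  fun x => PGame.rec (motive := fun _ => PGame.{u} → Prop × Prop)
    (fun xl xr xL xR ihL ihR => fun y => PGame.rec (motive := fun _ => Prop × Prop)
      (fun yl yr yL yR jhL jhR =>
        ((∀ i, (ihL i (mk yl yr yL yR)).2) ∧ (∀ j, (jhR j).2),
          (∃ i, (jhL i).1) ∨ (∃ j, (ihR j (mk yl yr yL yR)).1))) y) x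

noncomputable instance : LE PGame.{u} :=
  ⟨fun x y => (leLF x y).1⟩

noncomputable instance : LT PGame.{u} :=
  ⟨fun x y => x ≤ y ∧ ¬y ≤ x⟩

def Numeric : PGame → Prop
  | ⟨_, _, L, R⟩ => (∀ i j, L i < R j) ∧ (∀ i, Numeric (L i)) ∧ ∀ j, Numeric (R j)

end PGame

end SetTheory

open SetTheory

/-- Surreal numbers: numeric pre-games modulo `x ≤ y ∧ y ≤ x`. -/
def Surreal : Type (u + 1) :=
  Quot (fun a b : { x : PGame.{u} // x.Numeric } => a.1 ≤ b.1 ∧ b.1 ≤ a.1)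

def Surreal.mk (x : PGame.{u}) (h : x.Numeric) : Surreal.{u} :=
  Quot.mk _ ⟨x, h⟩

noncomputable def Ordinal.toPGame : Ordinal.{u} → PGame.{u}
  | o => PGame.mk o.ToType PEmpty (fun x => (Ordinal.ToType.toOrd x).1.toPGame) PEmpty.elim
termination_by o => o
decreasing_by exact (Ordinal.ToType.toOrd x).2

theorem Ordinal.toPGame_numeric (o : Ordinal.{u}) : o.toPGame.Numeric := by
  induction o using WellFoundedLT.induction with
  | _ o ih =>
    rw [Ordinal.toPGame, PGame.Numeric]
    exact ⟨fun _ j => j.elim, fun x => ih _ (Ordinal.ToType.toOrd x).2, fun j => j.elim⟩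

noncomputable def Ordinal.toSurreal (o : Ordinal.{u}) : Surreal.{u} :=
  Surreal.mk o.toPGame o.toPGame_numeric

/-! Every pregame `p` lies below some ordinal: the supremum of the successors of the bounds
of its Left options. If `o` is the least such ordinal, every `o' < o` fails `p ≤ o'`, hence
`o' ⧏ p`; when `p` has no Right options this is exactly `o ≤ p`. -/

namespace SetTheory.PGame

def LF (x y : PGame.{u}) : Prop :=
  (leLF x y).2

theorem mk_le_mk {xl xr : Type u} {xL : xl → PGame.{u}} {xR : xr → PGame.{u}}
    {yl yr : Type u} {yL : yl → PGame.{u}} {yR : yr → PGame.{u}} :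
    mk xl xr xL xR ≤ mk yl yr yL yR ↔
      (∀ i, LF (xL i) (mk yl yr yL yR)) ∧ ∀ j, LF (mk xl xr xL xR) (yR j) :=
  Iff.rfl

theorem mk_lf_mk {xl xr : Type u} {xL : xl → PGame.{u}} {xR : xr → PGame.{u}}
    {yl yr : Type u} {yL : yl → PGame.{u}} {yR : yr → PGame.{u}} :
    LF (mk xl xr xL xR) (mk yl yr yL yR) ↔
      (∃ i, mk xl xr xL xR ≤ yL i) ∨ ∃ j, xR j ≤ mk yl yr yL yR :=
  Iff.rfl

theorem le_iff_not_lf_and_le_iff_not_lf (x y : PGame.{u}) :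
    (x ≤ y ↔ ¬LF y x) ∧ (y ≤ x ↔ ¬LF x y) := by
  induction x generalizing y with
  | mk xl xr xL xR ihL ihR =>
    induction y with
    | mk yl yr yL yR jhL jhR =>
      simp only [mk_le_mk, mk_lf_mk, not_or, not_exists]
      constructor
      · refine and_congr (forall_congr' fun i => ?_) (forall_congr' fun j => ?_)
        · rw [(ihL i _).2, not_not]
        · rw [(jhR j).2, not_not]
      · refine and_congr (forall_congr' fun i => ?_) (forall_congr' fun j => ?_)
        · rw [(jhL i).1, not_not]
        · rw [(ihR j _).1, not_not]

theorem le_iff_not_lf (x y : PGame.{u}) : x ≤ y ↔ ¬LF y x :=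
  (le_iff_not_lf_and_le_iff_not_lf x y).1

end SetTheory.PGame

open SetTheory.PGame

theorem Ordinal.isEmpty_toPGame_rightMoves (o : Ordinal.{u}) : IsEmpty o.toPGame.RightMoves := by
  rw [Ordinal.toPGame]
  exact inferInstanceAs (IsEmpty PEmpty)

theorem Ordinal.exists_le_toPGame (p : PGame.{u}) : ∃ o : Ordinal.{u}, p ≤ o.toPGame := by
  induction p with
  | mk l r L R ih =>
    choose f hf using ih
    refine ⟨⨆ i, Order.succ (f i), ?_⟩
    rw [Ordinal.toPGame, mk_le_mk]
    refine ⟨fun i => ?_, fun j => j.elim⟩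
    have hlt : f i < ⨆ i, Order.succ (f i) :=
      (Order.lt_succ (f i)).trans_le (le_ciSup Ordinal.bddAbove_of_small i)
    cases h : L i with
    | mk a b c d =>
      rw [mk_lf_mk]
      refine Or.inl ⟨Ordinal.ToType.mk ⟨f i, hlt⟩, ?_⟩
      rw [← h]
      simpa [Ordinal.ToType.toOrd] using hf i

theorem Ordinal.toPGame_le_of_forall_lt_not_le {p : PGame.{u}} (hR : IsEmpty p.RightMoves)
    {o : Ordinal.{u}} (hmin : ∀ o' < o, ¬p ≤ o'.toPGame) : o.toPGame ≤ p := by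
  cases p with
  | mk pl pr pL pR =>
    rw [Ordinal.toPGame, mk_le_mk]
    refine ⟨fun i => ?_, fun j => (hR.false j).elim⟩
    have h := hmin (Ordinal.ToType.toOrd i).1 (Ordinal.ToType.toOrd i).2
    rwa [le_iff_not_lf, not_not] at h

/-- A surreal number is in the image of the canonical embedding of the ordinals into
the surreals iff it is represented by some numeric pregame with no Right moves. -/
theorem surreal_mem_range_toSurreal_iff (x : Surreal) :
    (∃ o : Ordinal, Ordinal.toSurreal o = x) ↔
      ∃ (p : PGame) (h : p.Numeric), IsEmpty p.RightMoves ∧ Surreal.mk p h = x := by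
  constructor
  · rintro ⟨o, rfl⟩
    exact ⟨o.toPGame, o.toPGame_numeric, o.isEmpty_toPGame_rightMoves, rfl⟩
  · rintro ⟨p, hp, hR, rfl⟩
    let S : Set Ordinal := {o | p ≤ o.toPGame}
    have hS : S.Nonempty := Ordinal.exists_le_toPGame p
    have hle : p ≤ (sInf S).toPGame := csInf_mem hS
    have hge : (sInf S).toPGame ≤ p :=
      Ordinal.toPGame_le_of_forall_lt_not_le hR fun o ho h =>
        (csInf_le' (show o ∈ S from h)).not_gt ho
    exact ⟨sInf S, Quot.sound ⟨hge, hle⟩⟩
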